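/- arXiv:0706.1499 — 4 statements merged into one kernel-verified Lean document; each statement's English description precedes it below -/
import Mathlib

section
/- Let T = Tri(A, M, B) be a triangular algebra satisfying conditions (i) and (ii), R' an arbitrary ring, and (M, M*) an elementary map on T × R' with M and M* bijective. If a, b, c ∈ T satisfy M(c) = M(a) + M(b), then for all s, t ∈ T one has M*⁻¹(s c t) = M*⁻¹(s a t) + M*⁻¹(s b t). -/
open MulOpposite

/-- The triangular algebra `Tri(A, M, B)`: formal 2×2 matrices `[[a, m],[0, b]]`
with `a ∈ A`, `m ∈ M`, `b ∈ B`. -/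
structure Tri (A M B : Type*) where
  fst : A
  mid : M
  snd : B

namespace Tri

variable {A M B : Type*}

instance [Add A] [Add M] [Add B] : Add (Tri A M B) :=
  ⟨fun x y => ⟨x.fst + y.fst, x.mid + y.mid, x.snd + y.snd⟩⟩

instance [Zero A] [Zero M] [Zero B] : Zero (Tri A M B) :=
  ⟨⟨0, 0, 0⟩⟩

/-- The usual matrix multiplication:
`[[a, m],[0, b]] * [[a', m'],[0, b']] = [[a a', a • m' + m • b'],[0, b b']]`,
where the right action of `B` on `M` is encoded via `Bᵐᵒᵖ`. -/
instance [Mul A] [Mul B] [Add M] [SMul A M] [SMul Bᵐᵒᵖ M] : Mul (Tri A M B) :=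
  ⟨fun x y => ⟨x.fst * y.fst, x.fst • y.mid + op y.snd • x.mid, x.snd * y.snd⟩⟩

end Tri

/-- `(f, g)` is an elementary map on `T × S`:
`f (a g(x) b) = f(a) x f(b)` and `g (x f(a) y) = g(x) a g(y)`. -/
def IsElementaryMap {T S : Type*} [Mul T] [Mul S] (f : T → S) (g : S → T) : Prop :=
  (∀ (a b : T) (x : S), f (a * g x * b) = f a * x * f b) ∧
  (∀ (x y : S) (a : T), g (x * f a * y) = g x * a * g y)

open Function

namespace IsElementaryMap

variable {T S : Type*} {f : T → S} {g : S → T} {g' : T → S}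

theorem inv_apply_mul_mul [Mul T] [Mul S] (hfg : IsElementaryMap f g)
    (h₁ : LeftInverse g' g) (h₂ : LeftInverse g g') (s x t : T) :
    g' (s * x * t) = g' s * f x * g' t := by
  conv_lhs => rw [← h₂ s, ← h₂ t, ← hfg.2, h₁]

theorem inv_apply_mul_mul_of_map_eq_add [Mul T] [Distrib S] (hfg : IsElementaryMap f g)
    (h₁ : LeftInverse g' g) (h₂ : LeftInverse g g') {a b c : T} (h : f c = f a + f b)
    (s t : T) : g' (s * c * t) = g' (s * a * t) + g' (s * b * t) := by
  simp only [hfg.inv_apply_mul_mul h₁ h₂, h, mul_add, add_mul]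

end IsElementaryMap

theorem elementary_map_key_lemma_general
    {A B M R' : Type*}
    [NonUnitalRing A]
    [NonUnitalRing B]
    [AddCommGroup M]
    [DistribSMul A M]
    [DistribSMul Bᵐᵒᵖ M]
    [NonUnitalRing R']
    (f : Tri A M B → R') (g : R' → Tri A M B)
    (g' : Tri A M B → R')
    (hg'₁ : ∀ x : R', g' (g x) = x) (hg'₂ : ∀ t : Tri A M B, g (g' t) = t)
    (helem : IsElementaryMap f g)
    (a b c : Tri A M B) (h : f c = f a + f b) :
    ∀ s t : Tri A M B, g' (s * c * t) = g' (s * a * t) + g' (s * b * t) :=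
  helem.inv_apply_mul_mul_of_map_eq_add hg'₁ hg'₂ h

/-- If `M(c) = M(a) + M(b)`, then `M*⁻¹(s c t) = M*⁻¹(s a t) + M*⁻¹(s b t)`
for all `s, t ∈ T`. -/
theorem elementary_map_key_lemma
    {R A B M R' : Type*} [CommRing R]
    [NonUnitalRing A] [Module R A] [SMulCommClass R A A] [IsScalarTower R A A]
    [NonUnitalRing B] [Module R B] [SMulCommClass R B B] [IsScalarTower R B B]
    [AddCommGroup M] [Module R M]
    [DistribSMul A M] [IsScalarTower A A M]
    [DistribSMul Bᵐᵒᵖ M] [IsScalarTower Bᵐᵒᵖ Bᵐᵒᵖ M]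
    [SMulCommClass A Bᵐᵒᵖ M]
    (add_smul_left : ∀ (a₁ a₂ : A) (m : M), (a₁ + a₂) • m = a₁ • m + a₂ • m)
    (add_smul_right : ∀ (b₁ b₂ : Bᵐᵒᵖ) (m : M), (b₁ + b₂) • m = b₁ • m + b₂ • m)
    (hfaithfulA : ∀ a : A, (∀ m : M, a • m = 0) → a = 0)
    (hfaithfulB : ∀ b : Bᵐᵒᵖ, (∀ m : M, b • m = 0) → b = 0)
    (hA : ∀ a : A, ((∀ x : A, a * x = 0) ∨ (∀ x : A, x * a = 0)) → a = 0)
    (hB : ∀ b : B, ((∀ x : B, b * x = 0) ∨ (∀ x : B, x * b = 0)) → b = 0)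
    [NonUnitalRing R']
    (f : Tri A M B → R') (g : R' → Tri A M B)
    (hf : Function.Bijective f) (hg : Function.Bijective g)
    (g' : Tri A M B → R')
    (hg'₁ : ∀ x : R', g' (g x) = x) (hg'₂ : ∀ t : Tri A M B, g (g' t) = t)
    (helem : IsElementaryMap f g)
    (a b c : Tri A M B) (h : f c = f a + f b) :
    ∀ s t : Tri A M B, g' (s * c * t) = g' (s * a * t) + g' (s * b * t) :=
  elementary_map_key_lemma_general f g g' hg'₁ hg'₂ helem a b c h
end

section
/- Let T = Tri(A, M, B) be a triangular algebra satisfying conditions (i) and (ii), R' an arbitrary ring, and (M, M*) an elementary map on T × R' with M and M* bijective. Then for all t₁₁, a₁₁ ∈ T₁₁, b₁₂, c₁₂ ∈ T₁₂, and d₂₂ ∈ T₂₂: (i) M(t₁₁ a₁₁ b₁₂ + t₁₁ c₁₂ d₂₂) = M(t₁₁ a₁₁ b₁₂) + M(t₁₁ c₁₂ d₂₂); (ii) M*⁻¹(t₁₁ a₁₁ b₁₂ + t₁₁ c₁₂ d₂₂) = M*⁻¹(t₁₁ a₁₁ b₁₂) + M*⁻¹(t₁₁ c₁₂ d₂₂).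 -/
open MulOpposite

/-! In matrix form the sum is `t (a + c) (b + d)` with `a + c = [[a,c],[0,0]]` and
`b + d = [[0,b],[0,d]]`. For `φ = M` take `z = M*(M*⁻¹ a + M*⁻¹ c)`, for `φ = M*⁻¹` take
`z = M⁻¹(M a + M c)`; the elementary-map identities give `φ (p z q) = φ (p a q) + φ (p c q)`
for all `p, q`, so by injectivity `p z q = p a q` whenever `p c q = 0`, and symmetrically.
Testing this on `[[e,0],[0,0]] z [[e',0],[0,0]]` and using that `A` has no nonzero one-sided
annihilators pins down the `A`-corner of `z`; one test on `t z [[0,0],[0,d]]` handles the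
`M`-corner, so `t z (b + d) = t (a + c) (b + d)`, and `φ` of it splits as claimed. -/

open Function

theorem zero_smul_of_add_smul {R N : Type*} [AddZeroClass R] [AddGroup N] [SMul R N]
    (h : ∀ (r s : R) (n : N), (r + s) • n = r • n + s • n) (n : N) : (0 : R) • n = 0 := by
  have h00 := h 0 0 n
  rw [add_zero] at h00
  exact left_eq_add.mp h00

theorem eq_of_forall_mul_mul_eq {A : Type*} [NonUnitalRing A]
    (hA : ∀ a : A, ((∀ x : A, a * x = 0) ∨ (∀ x : A, x * a = 0)) → a = 0) {u v : A}
    (h : ∀ e e' : A, e * u * e' = e * v * e') : u = v := by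
  have hright : ∀ e' : A, u * e' = v * e' := fun e' =>
    sub_eq_zero.mp <| hA _ <| Or.inr fun e => by
      rw [mul_sub, ← mul_assoc, ← mul_assoc, h, sub_self]
  exact sub_eq_zero.mp <| hA _ <| Or.inl fun e' => by rw [sub_mul, hright, sub_self]

section Sandwich

variable {T S : Type*} [Mul T] [Zero T] [AddZeroClass S] {φ : T → S} {x y z : T}

theorem mul_mul_eq_left_of_map_eq_add (hφ : Injective φ) (h0 : φ 0 = 0)
    (hz : ∀ p q, φ (p * z * q) = φ (p * x * q) + φ (p * y * q)) {p q : T}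
    (hy : p * y * q = 0) : p * z * q = p * x * q :=
  hφ <| by rw [hz, hy, h0, add_zero]

theorem mul_mul_eq_right_of_map_eq_add (hφ : Injective φ) (h0 : φ 0 = 0)
    (hz : ∀ p q, φ (p * z * q) = φ (p * x * q) + φ (p * y * q)) {p q : T}
    (hx : p * x * q = 0) : p * z * q = p * y * q :=
  hφ <| by rw [hz, hx, h0, zero_add]

end Sandwich

namespace IsElementaryMap

variable {T S : Type*} [Mul T] {f : T → S} {g : S → T} {g' : T → S}

theorem map_zero [Zero T] [MulZeroClass S] (h : IsElementaryMap f g)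
    (hT : ∀ t : T, 0 * t * 0 = 0) : f 0 = 0 := by
  simpa [hT] using h.1 0 0 0

theorem map_mul_add_mul [NonUnitalNonAssocSemiring S] (h : IsElementaryMap f g)
    (hg' : RightInverse g' g) (x y p q : T) :
    f (p * g (g' x + g' y) * q) = f (p * x * q) + f (p * y * q) := by
  rw [h.1, mul_add, add_mul, ← h.1, ← h.1, hg', hg']

theorem inv_map_mul_mul [Mul S] (h : IsElementaryMap f g) (hg'₁ : LeftInverse g' g)
    (hg'₂ : RightInverse g' g) (p z q : T) : g' (p * z * q) = g' p * f z * g' q := by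
  rw [← hg'₁ (g' p * f z * g' q), h.2, hg'₂, hg'₂]

theorem inv_map_zero [Zero T] [MulZeroClass S] (h : IsElementaryMap f g)
    (hg'₁ : LeftInverse g' g) (hg'₂ : RightInverse g' g) (hT : ∀ t : T, 0 * t * 0 = 0) :
    g' 0 = 0 := by
  have h000 := h.inv_map_mul_mul hg'₁ hg'₂ 0 0 0
  rwa [hT, h.map_zero hT, mul_zero, zero_mul] at h000

theorem inv_map_mul_add_mul [NonUnitalNonAssocSemiring S] (h : IsElementaryMap f g)
    (hg'₁ : LeftInverse g' g) (hg'₂ : RightInverse g' g) {x y z : T} (hz : f z = f x + f y)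
    (p q : T) : g' (p * z * q) = g' (p * x * q) + g' (p * y * q) := by
  simp only [h.inv_map_mul_mul hg'₁ hg'₂, hz, mul_add, add_mul]

end IsElementaryMap

namespace Tri

variable {A M B : Type*}

theorem mk_mul_mk [Mul A] [Mul B] [Add M] [SMul A M] [SMul Bᵐᵒᵖ M]
    (a a' : A) (m m' : M) (b b' : B) :
    mk a m b * mk a' m' b' = mk (a * a') (a • m' + op b' • m) (b * b') := rfl

theorem fst_mul [Mul A] [Mul B] [Add M] [SMul A M] [SMul Bᵐᵒᵖ M] (x y : Tri A M B) :
    (x * y).fst = x.fst * y.fst := rfl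

theorem mk_add_mk [Add A] [Add M] [Add B] (a a' : A) (m m' : M) (b b' : B) :
    mk a m b + mk a' m' b' = mk (a + a') (m + m') (b + b') := rfl

theorem zero_def [Zero A] [Zero M] [Zero B] : (0 : Tri A M B) = mk 0 0 0 := rfl

variable [NonUnitalRing A] [NonUnitalRing B] [AddCommGroup M] [DistribSMul A M]
  [DistribSMul Bᵐᵒᵖ M]

theorem zero_mul_mul_zero (hA0 : ∀ m : M, (0 : A) • m = 0) (x : Tri A M B) :
    0 * x * 0 = 0 := by
  obtain ⟨x₁, x₂, x₃⟩ := x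
  simp [zero_def, mk_mul_mk, hA0]

theorem mk_mul_mul_mk (e : A) (z : Tri A M B) (m : M) (d : B) :
    (mk e 0 0 * z * mk 0 m d : Tri A M B) = mk 0 ((e * z.fst) • m + op d • e • z.mid) 0 := by
  obtain ⟨z₁, z₂, z₃⟩ := z
  simp [mk_mul_mk]

theorem mk_mul_mk_mul_mk_eq_add (hA0 : ∀ m : M, (0 : A) • m = 0) (t a : A) (b c : M) (d : B) :
    (mk t 0 0 * mk a c 0 * mk 0 b d : Tri A M B) =
      mk t 0 0 * mk a 0 0 * mk 0 b 0 + mk t 0 0 * mk 0 c 0 * mk 0 0 d := by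
  simp [mk_mul_mul_mk, mk_add_mk, hA0]

theorem mk_mul_mk_mul_mk_left (t a : A) (b : M) (d : B) :
    (mk t 0 0 * mk a 0 0 * mk 0 b d : Tri A M B) = mk t 0 0 * mk a 0 0 * mk 0 b 0 := by
  simp [mk_mul_mul_mk]

theorem mk_mul_mk_mul_mk_right (hA0 : ∀ m : M, (0 : A) • m = 0) (t : A) (b c : M) (d : B) :
    (mk t 0 0 * mk 0 c 0 * mk 0 b d : Tri A M B) = mk t 0 0 * mk 0 c 0 * mk 0 0 d := by
  simp [mk_mul_mul_mk, hA0]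

theorem mk_mul_mul_mk_eq_of_sandwich (hA0 : ∀ m : M, (0 : A) • m = 0)
    (hB0 : ∀ m : M, (0 : Bᵐᵒᵖ) • m = 0)
    (hA : ∀ a : A, ((∀ x : A, a * x = 0) ∨ (∀ x : A, x * a = 0)) → a = 0)
    {t a : A} {b c : M} {d : B} {z : Tri A M B}
    (hc : ∀ p q : Tri A M B, p * mk 0 c 0 * q = 0 → p * z * q = p * mk a 0 0 * q)
    (ha : ∀ p q : Tri A M B, p * mk a 0 0 * q = 0 → p * z * q = p * mk 0 c 0 * q) :
    mk t 0 0 * z * mk 0 b d = (mk t 0 0 * mk a c 0 * mk 0 b d : Tri A M B) := by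
  have hfst : z.fst = a := eq_of_forall_mul_mul_eq hA fun e e' => by
    have hz := hc (mk e 0 0) (mk e' 0 0) (by simp [zero_def, mk_mul_mk, hB0])
    simpa only [fst_mul] using congrArg fst hz
  have hmid : op d • t • z.mid = op d • t • c := by
    have hz := ha (mk t 0 0) (mk 0 0 d) (by simp [zero_def, mk_mul_mul_mk])
    simpa [mk_mul_mul_mk, hA0] using congrArg mid hz
  rw [mk_mul_mul_mk, mk_mul_mul_mk, hfst, hmid]

theorem map_add_of_map_mul_mul_eq_add {S : Type*} [AddZeroClass S]
    (hA0 : ∀ m : M, (0 : A) • m = 0) (hB0 : ∀ m : M, (0 : Bᵐᵒᵖ) • m = 0)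
    (hA : ∀ a : A, ((∀ x : A, a * x = 0) ∨ (∀ x : A, x * a = 0)) → a = 0)
    {φ : Tri A M B → S} (hφ : Injective φ) (h0 : φ 0 = 0) {t a : A} {b c : M} {d : B}
    {z : Tri A M B} (hz : ∀ p q, φ (p * z * q) = φ (p * mk a 0 0 * q) + φ (p * mk 0 c 0 * q)) :
    φ (mk t 0 0 * mk a 0 0 * mk 0 b 0 + mk t 0 0 * mk 0 c 0 * mk 0 0 d) =
      φ (mk t 0 0 * mk a 0 0 * mk 0 b 0) + φ (mk t 0 0 * mk 0 c 0 * mk 0 0 d) := by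
  have hzbd := mk_mul_mul_mk_eq_of_sandwich (t := t) (b := b) (d := d) hA0 hB0 hA
    (fun _ _ => mul_mul_eq_left_of_map_eq_add hφ h0 hz)
    (fun _ _ => mul_mul_eq_right_of_map_eq_add hφ h0 hz)
  rw [← mk_mul_mk_mul_mk_eq_add hA0, ← hzbd, hz, mk_mul_mk_mul_mk_left,
    mk_mul_mk_mul_mk_right hA0]

end Tri

theorem elementary_map_add_products_general
    {A B M R' : Type*}
    [NonUnitalRing A]
    [NonUnitalRing B]
    [AddCommGroup M]
    [DistribSMul A M]
    [DistribSMul Bᵐᵒᵖ M]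
    (add_smul_left : ∀ (a₁ a₂ : A) (m : M), (a₁ + a₂) • m = a₁ • m + a₂ • m)
    (add_smul_right : ∀ (b₁ b₂ : Bᵐᵒᵖ) (m : M), (b₁ + b₂) • m = b₁ • m + b₂ • m)
    (hA : ∀ a : A, ((∀ x : A, a * x = 0) ∨ (∀ x : A, x * a = 0)) → a = 0)
    [NonUnitalRing R']
    (f : Tri A M B → R') (g : R' → Tri A M B)
    (hf : Function.Bijective f)
    (g' : Tri A M B → R')
    (hg'₁ : ∀ x : R', g' (g x) = x) (hg'₂ : ∀ t : Tri A M B, g (g' t) = t)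
    (helem : IsElementaryMap f g)
    :
    ∀ (t a : A) (b c : M) (d : B),
      f (Tri.mk t 0 0 * Tri.mk a 0 0 * Tri.mk 0 b 0 +
          Tri.mk t 0 0 * Tri.mk 0 c 0 * Tri.mk 0 0 d) =
        f (Tri.mk t 0 0 * Tri.mk a 0 0 * Tri.mk 0 b 0) +
          f (Tri.mk t 0 0 * Tri.mk 0 c 0 * Tri.mk 0 0 d) ∧
      g' (Tri.mk t 0 0 * Tri.mk a 0 0 * Tri.mk 0 b 0 +
          Tri.mk t 0 0 * Tri.mk 0 c 0 * Tri.mk 0 0 d) =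
        g' (Tri.mk t 0 0 * Tri.mk a 0 0 * Tri.mk 0 b 0) +
          g' (Tri.mk t 0 0 * Tri.mk 0 c 0 * Tri.mk 0 0 d) := by
  intro t a b c d
  have hA0 := zero_smul_of_add_smul add_smul_left
  have hB0 := zero_smul_of_add_smul add_smul_right
  have hT := Tri.zero_mul_mul_zero (B := B) hA0
  obtain ⟨ζ, hζ⟩ := hf.2 (f (Tri.mk a 0 0) + f (Tri.mk 0 c 0))
  exact ⟨Tri.map_add_of_map_mul_mul_eq_add hA0 hB0 hA hf.1 (helem.map_zero hT)
      (helem.map_mul_add_mul hg'₂ _ _),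
    Tri.map_add_of_map_mul_mul_eq_add hA0 hB0 hA (LeftInverse.injective (f := g') hg'₂)
      (helem.inv_map_zero hg'₁ hg'₂ hT) (helem.inv_map_mul_add_mul hg'₁ hg'₂ hζ)⟩

/-- `M` and `M*⁻¹` are additive on sums of the form `t₁₁ a₁₁ b₁₂ + t₁₁ c₁₂ d₂₂`. -/
theorem elementary_map_add_products
    {R A B M R' : Type*} [CommRing R]
    [NonUnitalRing A] [Module R A] [SMulCommClass R A A] [IsScalarTower R A A]
    [NonUnitalRing B] [Module R B] [SMulCommClass R B B] [IsScalarTower R B B]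
    [AddCommGroup M] [Module R M]
    [DistribSMul A M] [IsScalarTower A A M]
    [DistribSMul Bᵐᵒᵖ M] [IsScalarTower Bᵐᵒᵖ Bᵐᵒᵖ M]
    [SMulCommClass A Bᵐᵒᵖ M]
    (add_smul_left : ∀ (a₁ a₂ : A) (m : M), (a₁ + a₂) • m = a₁ • m + a₂ • m)
    (add_smul_right : ∀ (b₁ b₂ : Bᵐᵒᵖ) (m : M), (b₁ + b₂) • m = b₁ • m + b₂ • m)
    (hfaithfulA : ∀ a : A, (∀ m : M, a • m = 0) → a = 0)
    (hfaithfulB : ∀ b : Bᵐᵒᵖ, (∀ m : M, b • m = 0) → b = 0)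
    (hA : ∀ a : A, ((∀ x : A, a * x = 0) ∨ (∀ x : A, x * a = 0)) → a = 0)
    (hB : ∀ b : B, ((∀ x : B, b * x = 0) ∨ (∀ x : B, x * b = 0)) → b = 0)
    [NonUnitalRing R']
    (f : Tri A M B → R') (g : R' → Tri A M B)
    (hf : Function.Bijective f) (hg : Function.Bijective g)
    (g' : Tri A M B → R')
    (hg'₁ : ∀ x : R', g' (g x) = x) (hg'₂ : ∀ t : Tri A M B, g (g' t) = t)
    (helem : IsElementaryMap f g)
    :
    ∀ (t a : A) (b c : M) (d : B),
      f (Tri.mk t 0 0 * Tri.mk a 0 0 * Tri.mk 0 b 0 +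
          Tri.mk t 0 0 * Tri.mk 0 c 0 * Tri.mk 0 0 d) =
        f (Tri.mk t 0 0 * Tri.mk a 0 0 * Tri.mk 0 b 0) +
          f (Tri.mk t 0 0 * Tri.mk 0 c 0 * Tri.mk 0 0 d) ∧
      g' (Tri.mk t 0 0 * Tri.mk a 0 0 * Tri.mk 0 b 0 +
          Tri.mk t 0 0 * Tri.mk 0 c 0 * Tri.mk 0 0 d) =
        g' (Tri.mk t 0 0 * Tri.mk a 0 0 * Tri.mk 0 b 0) +
          g' (Tri.mk t 0 0 * Tri.mk 0 c 0 * Tri.mk 0 0 d) :=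
  elementary_map_add_products_general add_smul_left add_smul_right hA f g hf g' hg'₁ hg'₂ helem
end

section
/- (Martindale) Let R be a ring containing a family {e_α : α ∈ Λ} of idempotents such that: (i) xR = {0} implies x = 0; (ii) if e_α R x = {0} for every α ∈ Λ, then x = 0; (iii) for each α ∈ Λ, e_α x e_α R (1 − e_α) = {0} implies e_α x e_α = 0 (interpreted as e_α x e_α r = e_α x e_α r e_α for all r ∈ R when R is not unital). Then any multiplicative bijective map from R onto an arbitrary ring R' is additive. -/
/-!
For `x, y : R` let `s` be the preimage of `φ x + φ y`. Since `φ (s r) = φ (x r) + φ (y r)`,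
injectivity gives `s r = x r + y r` as soon as `φ` is known to be additive on the pair
`(x r, y r)`, and similarly on the left; the faithfulness conditions then turn such identities
into `s = x + y`. Relative to one idempotent `e` this bootstraps additivity from pairs with a zero
summand to pairs `a ∈ R e`, `b ∈ R (1 - e)` (and their mirror images), then, through
`(p + q) (u + v) = p u + q v` when `p v = q u = 0`, to the Peirce component `e R (1 - e)`, then by
(iii) to `e R e`, hence to all of `e R`. Finally `e_α r (s - (x + y)) = 0` for all `α, r`.

As `R` need not be unital, `c ∈ e R (1 - e)` is written `e * c = c ∧ c * e = 0`, and so on.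
-/

open Function

namespace MulHom

variable {R R' : Type*} [NonUnitalRing R] [NonUnitalRing R'] {f : R →ₙ* R'}

theorem map_zero_of_bijective (hf : Bijective f) : f 0 = 0 := by
  obtain ⟨a, ha⟩ := hf.2 0
  have : a * 0 = a := hf.1 (by rw [map_mul, ha, zero_mul])
  rw [mul_zero] at this
  rwa [← this] at ha

theorem map_add_of_preimage_eq (hf : Surjective f) {a b : R}
    (h : ∀ s, f s = f a + f b → s = a + b) : f (a + b) = f a + f b := by
  obtain ⟨s, hs⟩ := hf (f a + f b)
  rw [← h s hs, hs]

theorem map_mul_add_mul (h0 : f 0 = 0) {p q u v : R} (hpq : f (p + q) = f p + f q)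
    (huv : f (u + v) = f u + f v) (hpv : p * v = 0) (hqu : q * u = 0) :
    f (p * u + q * v) = f (p * u) + f (q * v) := by
  have hprod : (p + q) * (u + v) = p * u + q * v := by
    rw [add_mul, mul_add, mul_add, hpv, hqu, add_zero, zero_add]
  calc f (p * u + q * v) = (f p + f q) * (f u + f v) := by rw [← hprod, map_mul, hpq, huv]
    _ = f (p * u) + f (p * v) + (f (q * u) + f (q * v)) := by
        simp only [add_mul, mul_add, map_mul]
        abel
    _ = f (p * u) + f (q * v) := by rw [hpv, hqu, h0, add_zero, zero_add]

theorem map_mul_right_of_map_eq_add {s a b : R} (hs : f s = f a + f b) (r : R) :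
    f (s * r) = f (a * r) + f (b * r) := by
  rw [map_mul, hs, add_mul, map_mul, map_mul]

theorem map_mul_left_of_map_eq_add {s a b : R} (hs : f s = f a + f b) (r : R) :
    f (r * s) = f (r * a) + f (r * b) := by
  rw [map_mul, hs, mul_add, map_mul, map_mul]

theorem mul_right_eq_of_map_eq_add (hf : Injective f) {s a b r : R} (hs : f s = f a + f b)
    (h : f (a * r + b * r) = f (a * r) + f (b * r)) : s * r = a * r + b * r :=
  hf (by rw [h, map_mul_right_of_map_eq_add hs])

theorem mul_left_eq_of_map_eq_add (hf : Injective f) {s a b r : R} (hs : f s = f a + f b)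
    (h : f (r * a + r * b) = f (r * a) + f (r * b)) : r * s = r * a + r * b :=
  hf (by rw [h, map_mul_left_of_map_eq_add hs])

variable {e : R}

theorem map_add_of_mul_eq_self_of_mul_eq_zero_right (hR : ∀ x : R, (∀ r, x * r = 0) → x = 0)
    (hf : Bijective f) {a b : R} (ha : a * e = a) (hb : b * e = 0) :
    f (a + b) = f a + f b := by
  have h0 := map_zero_of_bijective hf
  refine map_add_of_preimage_eq hf.2 fun s hs => sub_eq_zero.1 (hR _ fun r => ?_)
  have hber : b * (e * r) = 0 := by rw [← mul_assoc, hb, zero_mul]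
  have haer : a * (r - e * r) = 0 := by rw [mul_sub, ← mul_assoc, ha, sub_self]
  have h₁ := mul_right_eq_of_map_eq_add hf.1 hs (r := e * r)
    (by rw [hber, add_zero, h0, add_zero])
  have h₂ := mul_right_eq_of_map_eq_add hf.1 hs (r := r - e * r)
    (by rw [haer, zero_add, h0, zero_add])
  calc (s - (a + b)) * r = s * (e * r) + s * (r - e * r)
        - (a * (e * r) + b * (e * r)) - (a * (r - e * r) + b * (r - e * r)) := by noncomm_ring
    _ = 0 := by rw [h₁, h₂]; abel

theorem map_add_of_mul_eq_self_of_mul_eq_zero_left (hL : ∀ x : R, (∀ r, r * x = 0) → x = 0)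
    (hf : Bijective f) {a b : R} (ha : e * a = a) (hb : e * b = 0) :
    f (a + b) = f a + f b := by
  have h0 := map_zero_of_bijective hf
  refine map_add_of_preimage_eq hf.2 fun s hs => sub_eq_zero.1 (hL _ fun r => ?_)
  have hreb : r * e * b = 0 := by rw [mul_assoc, hb, mul_zero]
  have hrea : (r - r * e) * a = 0 := by rw [sub_mul, mul_assoc, ha, sub_self]
  have h₁ := mul_left_eq_of_map_eq_add hf.1 hs (r := r * e)
    (by rw [hreb, add_zero, h0, add_zero])
  have h₂ := mul_left_eq_of_map_eq_add hf.1 hs (r := r - r * e)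
    (by rw [hrea, zero_add, h0, zero_add])
  calc r * (s - (a + b)) = r * e * s + (r - r * e) * s
        - (r * e * a + r * e * b) - ((r - r * e) * a + (r - r * e) * b) := by noncomm_ring
    _ = 0 := by rw [h₁, h₂]; abel

theorem mul_mul_sub_mul_eq_of_map_eq_add (hR : ∀ x : R, (∀ r, x * r = 0) → x = 0)
    (hL : ∀ x : R, (∀ r, r * x = 0) → x = 0) (he : IsIdempotentElem e) (hf : Bijective f)
    {c d s : R} (hc : e * c = c) (hd' : d * e = 0) (hs : f s = f c + f d)
    {p : R} (hp : p * e = p) (r : R) :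
    p * s * (r - e * r) = p * (c + d) * (r - e * r) := by
  set q := r - e * r
  have hpd : f (p + p * d) = f p + f (p * d) :=
    map_add_of_mul_eq_self_of_mul_eq_zero_right hR hf hp (by rw [mul_assoc, hd', mul_zero])
  have hcq : f (c * q + q) = f (c * q) + f q :=
    map_add_of_mul_eq_self_of_mul_eq_zero_left hL hf (by rw [← mul_assoc, hc])
      (by rw [mul_sub, ← mul_assoc, he.eq, sub_self])
  have hpq : p * q = 0 := by
    rw [← hp, mul_assoc, mul_sub, ← mul_assoc e e, he.eq, sub_self, mul_zero]
  have hpdcq : p * d * (c * q) = 0 := by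
    rw [mul_assoc, ← mul_assoc d, ← hc, ← mul_assoc d, hd', zero_mul, zero_mul, mul_zero]
  have hadd := map_mul_add_mul (map_zero_of_bijective hf) hpd hcq hpq hpdcq
  rw [← mul_assoc p c] at hadd
  rw [mul_right_eq_of_map_eq_add hf.1 (map_mul_left_of_map_eq_add hs p) hadd, mul_add, add_mul]

theorem map_add_of_peirce₁₂ (hR : ∀ x : R, (∀ r, x * r = 0) → x = 0)
    (hL : ∀ x : R, (∀ r, r * x = 0) → x = 0) (he : IsIdempotentElem e) (hf : Bijective f)
    {c d : R} (hc : e * c = c) (hc' : c * e = 0) (hd : e * d = d) (hd' : d * e = 0) :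
    f (c + d) = f c + f d := by
  have h0 := map_zero_of_bijective hf
  refine map_add_of_preimage_eq hf.2 fun s hs => ?_
  have hce : ∀ r, c * (e * r) = 0 := fun r => by rw [← mul_assoc, hc', zero_mul]
  have hde : ∀ r, d * (e * r) = 0 := fun r => by rw [← mul_assoc, hd', zero_mul]
  have hec : ∀ t, (t - t * e) * c = 0 := fun t => by rw [sub_mul, mul_assoc, hc, sub_self]
  have hed : ∀ t, (t - t * e) * d = 0 := fun t => by rw [sub_mul, mul_assoc, hd, sub_self]
  have hse : ∀ r, s * (e * r) = 0 := fun r => by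
    rw [mul_right_eq_of_map_eq_add hf.1 hs (by rw [hce, hde, add_zero, h0, add_zero]), hce, hde,
      add_zero]
  have hes : ∀ t, (t - t * e) * s = 0 := fun t => by
    rw [mul_left_eq_of_map_eq_add hf.1 hs (by rw [hec, hed, add_zero, h0, add_zero]), hec, hed,
      add_zero]
  have hRe : ∀ p, p * e = p → p * (s - (c + d)) = 0 := fun p hp => hR _ fun r => by
    calc p * (s - (c + d)) * r
        = (p * s * (r - e * r) - p * (c + d) * (r - e * r))
          + p * (s * (e * r) - (c * (e * r) + d * (e * r))) := by noncomm_ring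
      _ = 0 := by
        rw [mul_mul_sub_mul_eq_of_map_eq_add hR hL he hf hc hd' hs hp, hse, hce, hde]
        simp
  refine sub_eq_zero.1 (hL _ fun t => ?_)
  calc t * (s - (c + d))
      = (t - t * e) * s - ((t - t * e) * c + (t - t * e) * d) + t * e * (s - (c + d)) := by
        noncomm_ring
    _ = 0 := by rw [hes, hec, hed, hRe _ (by rw [mul_assoc, he.eq])]; simp

theorem map_add_of_peirce₁₁ (hR : ∀ x : R, (∀ r, x * r = 0) → x = 0)
    (hL : ∀ x : R, (∀ r, r * x = 0) → x = 0) (he : IsIdempotentElem e)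
    (hcorner : ∀ x : R, (∀ r, e * x * e * r = e * x * e * r * e) → e * x * e = 0)
    (hf : Bijective f) {c d : R} (hc : e * c = c) (hc' : c * e = c) (hd : e * d = d)
    (hd' : d * e = d) : f (c + d) = f c + f d := by
  have h0 := map_zero_of_bijective hf
  refine map_add_of_preimage_eq hf.2 fun s hs => ?_
  have hse : s * e = s := hf.1 (by rw [map_mul_right_of_map_eq_add hs, hc', hd', hs])
  have hes : e * s = s := hf.1 (by rw [map_mul_left_of_map_eq_add hs, hc, hd, hs])
  have hz_corner : e * (s - (c + d)) * e = s - (c + d) := by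
    rw [mul_sub, mul_add, hes, hc, hd, sub_mul, add_mul, hse, hc', hd']
  have hz_compl : ∀ r, (s - (c + d)) * (r - e * r) = 0 := fun r => by
    have hcr : c * (r - e * r) = 0 := by rw [mul_sub, ← mul_assoc, hc', sub_self]
    have hdr : d * (r - e * r) = 0 := by rw [mul_sub, ← mul_assoc, hd', sub_self]
    rw [sub_mul, mul_right_eq_of_map_eq_add hf.1 hs (by rw [hcr, hdr, add_zero, h0, add_zero]),
      add_mul, sub_self]
  have hz_peirce₁₂ : ∀ r, (s - (c + d)) * (e * r - e * r * e) = 0 := fun r => by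
    have hr : (e * r - e * r * e) * e = 0 := by rw [sub_mul, mul_assoc _ e e, he.eq, sub_self]
    rw [sub_mul, mul_right_eq_of_map_eq_add hf.1 hs (map_add_of_peirce₁₂ hR hL he hf
      (by rw [← mul_assoc, hc]) (by rw [mul_assoc, hr, mul_zero])
      (by rw [← mul_assoc, hd]) (by rw [mul_assoc, hr, mul_zero])), add_mul, sub_self]
  have hz : ∀ r, (s - (c + d)) * r = (s - (c + d)) * (e * r * e) := fun r => by
    calc (s - (c + d)) * r
        = (s - (c + d)) * (r - e * r) + (s - (c + d)) * (e * r - e * r * e)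
          + (s - (c + d)) * (e * r * e) := by noncomm_ring
      _ = (s - (c + d)) * (e * r * e) := by rw [hz_compl, hz_peirce₁₂, add_zero, zero_add]
  rw [← sub_eq_zero, ← hz_corner]
  refine hcorner _ fun r => ?_
  rw [hz_corner, mul_assoc _ r e, hz r, hz (r * e), ← mul_assoc e r e, mul_assoc _ e e, he.eq]

theorem map_add_of_mul_eq_self (hR : ∀ x : R, (∀ r, x * r = 0) → x = 0)
    (hL : ∀ x : R, (∀ r, r * x = 0) → x = 0) (he : IsIdempotentElem e)
    (hcorner : ∀ x : R, (∀ r, e * x * e * r = e * x * e * r * e) → e * x * e = 0)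
    (hf : Bijective f) {u v : R} (hu : e * u = u) (hv : e * v = v) :
    f (u + v) = f u + f v := by
  have hxe : ∀ x, x * e * e = x * e := fun x => by rw [mul_assoc, he.eq]
  have hx1e : ∀ x, (x - x * e) * e = 0 := fun x => by rw [sub_mul, hxe, sub_self]
  have hsplit : ∀ x, f x = f (x * e) + f (x - x * e) := fun x => by
    rw [← map_add_of_mul_eq_self_of_mul_eq_zero_right hR hf (hxe x) (hx1e x), add_sub_cancel]
  have h₁₁ : f (u * e + v * e) = f (u * e) + f (v * e) :=
    map_add_of_peirce₁₁ hR hL he hcorner hf (by rw [← mul_assoc, hu]) (hxe u)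
      (by rw [← mul_assoc, hv]) (hxe v)
  have h₁₂ : f (u - u * e + (v - v * e)) = f (u - u * e) + f (v - v * e) :=
    map_add_of_peirce₁₂ hR hL he hf (by rw [mul_sub, ← mul_assoc, hu]) (hx1e u)
      (by rw [mul_sub, ← mul_assoc, hv]) (hx1e v)
  have h₁ : (u * e + v * e) * e = u * e + v * e := by rw [add_mul, hxe, hxe]
  have h₂ : (u - u * e + (v - v * e)) * e = 0 := by rw [add_mul, hx1e, hx1e, add_zero]
  calc f (u + v) = f (u * e + v * e + (u - u * e + (v - v * e))) := by congr 1; abel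
    _ = f (u * e) + f (v * e) + (f (u - u * e) + f (v - v * e)) := by
        rw [map_add_of_mul_eq_self_of_mul_eq_zero_right hR hf h₁ h₂, h₁₁, h₁₂]
    _ = f u + f v := by rw [hsplit u, hsplit v]; abel

end MulHom

/-- **Martindale's theorem.** Let `R` be a ring containing a family `{e α : α ∈ Λ}` of
idempotents such that (i) `x R = 0` implies `x = 0`; (ii) `e α * R * x = 0` for all `α`
implies `x = 0`; (iii) for each `α`, `eα x eα R (1 - eα) = 0` implies `eα x eα = 0`
(stated without a unit as `eα x eα r = eα x eα r eα` for all `r`).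
Then any multiplicative bijection of `R` onto an arbitrary ring `R'` is additive. -/
theorem martindale_multiplicative_bijective_additive
    {R R' : Type*} [NonUnitalRing R] [NonUnitalRing R']
    {Λ : Type*} (e : Λ → R) (he : ∀ α, e α * e α = e α)
    (h₁ : ∀ x : R, (∀ r : R, x * r = 0) → x = 0)
    (h₂ : ∀ x : R, (∀ (α : Λ) (r : R), e α * r * x = 0) → x = 0)
    (h₃ : ∀ (α : Λ) (x : R),
      (∀ r : R, e α * x * e α * r = e α * x * e α * r * e α) → e α * x * e α = 0)
    (φ : R → R') (hφ : Function.Bijective φ)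
    (hmul : ∀ x y : R, φ (x * y) = φ x * φ y) :
    ∀ x y : R, φ (x + y) = φ x + φ y := by
  let f : R →ₙ* R' := ⟨φ, hmul⟩
  have hL : ∀ x : R, (∀ r, r * x = 0) → x = 0 := fun x hx => h₂ x fun α r => hx _
  intro x y
  refine MulHom.map_add_of_preimage_eq (f := f) hφ.2 fun s (hs : φ s = φ x + φ y) =>
    sub_eq_zero.1 (h₂ _ fun α r => ?_)
  have hrow : ∀ z, e α * (e α * r * z) = e α * r * z := fun z => by
    rw [← mul_assoc, ← mul_assoc, he]
  rw [mul_sub, MulHom.mul_left_eq_of_map_eq_add (f := f) hφ.1 hs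
    (MulHom.map_add_of_mul_eq_self h₁ hL (he α) (h₃ α) hφ (hrow x) (hrow y)), mul_add,
    sub_self]
end

section
/- Every multiplicative bijective map from a prime ring containing a nontrivial idempotent onto an arbitrary ring is additive. -/
/-!
For a multiplicative bijection `f : R ≃* R'`, measure the failure of additivity at `(a, b)` by
`δ(a, b) = f⁻¹ (f a + f b) - (a + b)`. Since `f⁻¹` is multiplicative as well,
`δ(a, b) z = δ(a z, b z)` and `z δ(a, b) = δ(z a, z b)`, so the vanishing of `δ` can be proved by
annihilator arguments. In a prime ring with a nontrivial idempotent `e`, both `e R x = 0` and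
`x R (1 - e) = 0` force `x = 0`. Following Martindale, this kills `δ` on the Peirce spaces
`R₁₂`, `R₂₂`, `R₂₁`, `R₁₁` in this order; since `f` also splits every element into its Peirce
components additively (`f x = f (x e) + f (x - x e)` and its left analogue), `f` is additive.
-/

-- In a unital ring the two conditions read `e R x = 0 → x = 0` and `x R (1 - e) = 0 → x = 0`.
structure IsNondegenerateIdempotent {R : Type*} [NonUnitalRing R] (e : R) : Prop where
  isIdempotentElem : IsIdempotentElem e
  eq_zero_of_mul_mul_eq_zero : ∀ x : R, (∀ r, e * r * x = 0) → x = 0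
  eq_zero_of_mul_eq_mul_mul : ∀ x : R, (∀ r, x * r = x * r * e) → x = 0

namespace IsNondegenerateIdempotent

variable {R : Type*} [NonUnitalRing R] {e : R}

theorem eq_zero_of_forall_mul_eq_zero_left (he : IsNondegenerateIdempotent e) (x : R)
    (hx : ∀ r, r * x = 0) : x = 0 :=
  he.eq_zero_of_mul_mul_eq_zero x fun r => by rw [mul_assoc, hx, mul_zero]

theorem eq_zero_of_forall_mul_eq_zero_right (he : IsNondegenerateIdempotent e) (x : R)
    (hx : ∀ r, x * r = 0) : x = 0 :=
  he.eq_zero_of_mul_eq_mul_mul x fun r => by rw [hx, zero_mul]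

end IsNondegenerateIdempotent

namespace MulEquiv

variable {R R' : Type*} [NonUnitalRing R] [NonUnitalRing R'] (f : R ≃* R')

def addDefect (a b : R) : R := f.symm (f a + f b) - (a + b)

theorem addDefect_eq_zero_iff (a b : R) : f.addDefect a b = 0 ↔ f (a + b) = f a + f b := by
  rw [addDefect, sub_eq_zero, symm_apply_eq, eq_comm]

theorem addDefect_mul (a b z : R) : f.addDefect a b * z = f.addDefect (a * z) (b * z) := by
  rw [addDefect, addDefect, map_mul f a z, map_mul f b z, ← add_mul, map_mul f.symm,
    symm_apply_apply, sub_mul, add_mul]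

theorem mul_addDefect (z a b : R) : z * f.addDefect a b = f.addDefect (z * a) (z * b) := by
  rw [addDefect, addDefect, map_mul f z a, map_mul f z b, ← mul_add, map_mul f.symm,
    symm_apply_apply, mul_sub, mul_add]

@[simp]
theorem addDefect_zero_left (b : R) : f.addDefect 0 b = 0 := by
  simp [addDefect]

@[simp]
theorem addDefect_zero_right (a : R) : f.addDefect a 0 = 0 := by
  simp [addDefect]

theorem addDefect_eq_zero_of_mul_right {e : R} (hr : ∀ x : R, (∀ r, x * r = 0) → x = 0)
    {a b : R} (ha : a * e = a) (hb : b * e = 0) : f.addDefect a b = 0 := by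
  refine hr _ fun r => ?_
  have h₁ : a * (e * r) = a * r := by rw [← mul_assoc, ha]
  have h₂ : b * (e * r) = 0 := by rw [← mul_assoc, hb, zero_mul]
  have h₃ : a * (r - e * r) = 0 := by rw [mul_sub, h₁, sub_self]
  have h₄ : b * (r - e * r) = b * r := by rw [mul_sub, h₂, sub_zero]
  calc f.addDefect a b * r = f.addDefect a b * (e * r) + f.addDefect a b * (r - e * r) := by
        rw [← mul_add, add_sub_cancel]
    _ = 0 := by
      rw [addDefect_mul, addDefect_mul, h₁, h₂, h₃, h₄, addDefect_zero_right,
        addDefect_zero_left, add_zero]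

theorem addDefect_eq_zero_of_mul_left {e : R} (hl : ∀ x : R, (∀ r, r * x = 0) → x = 0)
    {a b : R} (ha : e * a = a) (hb : e * b = 0) : f.addDefect a b = 0 := by
  refine hl _ fun r => ?_
  have h₁ : r * e * a = r * a := by rw [mul_assoc, ha]
  have h₂ : r * e * b = 0 := by rw [mul_assoc, hb, mul_zero]
  have h₃ : (r - r * e) * a = 0 := by rw [sub_mul, h₁, sub_self]
  have h₄ : (r - r * e) * b = r * b := by rw [sub_mul, h₂, sub_zero]
  calc r * f.addDefect a b = r * e * f.addDefect a b + (r - r * e) * f.addDefect a b := by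
        rw [← add_mul, add_sub_cancel]
    _ = 0 := by
      rw [mul_addDefect, mul_addDefect, h₁, h₂, h₃, h₄, addDefect_zero_right,
        addDefect_zero_left, add_zero]

theorem map_mul_add_mul {e : R} (hl : ∀ x : R, (∀ r, r * x = 0) → x = 0)
    (hr : ∀ x : R, (∀ r, x * r = 0) → x = 0) {p q u v : R} (hp : p * e = p) (hu : u * e = 0)
    (hq : e * q = q) (hv : e * v = 0) : f (p * q + u * v) = f (p * q) + f (u * v) := by
  have hpv : p * v = 0 := by rw [← hp, mul_assoc, hv, mul_zero]
  have huq : u * q = 0 := by rw [← hq, ← mul_assoc, hu, zero_mul]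
  have hpu := (f.addDefect_eq_zero_iff p u).mp (f.addDefect_eq_zero_of_mul_right hr hp hu)
  have hqv := (f.addDefect_eq_zero_iff q v).mp (f.addDefect_eq_zero_of_mul_left hl hq hv)
  calc f (p * q + u * v) = f ((p + u) * (q + v)) := by
        rw [add_mul, mul_add, mul_add, hpv, huq, add_zero, zero_add]
    _ = f (p * q) + f (u * v) := by
        rw [map_mul, hpu, hqv, add_mul, mul_add, mul_add, ← map_mul, ← map_mul, ← map_mul,
          ← map_mul, hpv, huq, map_zero, add_zero, zero_add]

section Peirce

/- `a ∈ Rᵢⱼ` is spelled out through `e * a` and `a * e`: the index `1` means that `e` fixes `a` on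
that side, the index `2` that it kills `a`. -/

variable {f} {e : R}

theorem addDefect_eq_zero_of_peirce₁₂ (he : IsNondegenerateIdempotent e) {a b : R}
    (ha₁ : e * a = a) (ha₂ : a * e = 0)
    (hb₁ : e * b = b) (hb₂ : b * e = 0) : f.addDefect a b = 0 := by
  have hee := he.isIdempotentElem
  set δ := f.addDefect a b with hδ
  have hδe : δ * e = 0 := by rw [hδ, addDefect_mul, ha₂, hb₂, addDefect_zero_left]
  have heδ : e * δ = δ := by
    refine (sub_eq_zero.mp (he.eq_zero_of_forall_mul_eq_zero_left _ fun r => ?_)).symm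
    rw [mul_sub, ← mul_assoc, ← sub_mul, hδ, mul_addDefect, sub_mul, sub_mul, mul_assoc, ha₁,
      mul_assoc, hb₁, sub_self, sub_self, addDefect_zero_left]
  have hδy : ∀ y, e * y = 0 → δ * y = 0 := fun y hy => by
    refine he.eq_zero_of_mul_mul_eq_zero _ fun s => ?_
    calc e * s * (δ * y) = f.addDefect (e * s * e * a * y) (e * s * e * (b * y)) := by
          rw [← heδ, hδ, ← mul_assoc, ← mul_assoc, mul_addDefect, addDefect_mul,
            mul_assoc _ b]
      _ = 0 := by
        -- `(e s e + e s e a) (b y + y) = e s e b y + e s e a y`, both cross terms vanish.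
        have hp : e * s * e * e = e * s * e := hee.mul_mul_self _
        have hu : e * s * e * a * e = 0 := by rw [mul_assoc, ha₂, mul_zero]
        have hq : e * (b * y) = b * y := by rw [← mul_assoc, hb₁]
        rw [addDefect_eq_zero_iff, add_comm, map_mul_add_mul f he.eq_zero_of_forall_mul_eq_zero_left
          he.eq_zero_of_forall_mul_eq_zero_right hp hu hq hy, add_comm]
  refine he.eq_zero_of_forall_mul_eq_zero_right _ fun r => ?_
  calc δ * r = δ * (r - e * r) := by rw [mul_sub, ← mul_assoc, hδe, zero_mul, sub_zero]
    _ = 0 := hδy _ (by rw [mul_sub, ← mul_assoc, hee.eq, sub_self])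

theorem addDefect_eq_zero_of_peirce₂₂ (he : IsNondegenerateIdempotent e) {a b : R}
    (ha₁ : e * a = 0) (ha₂ : a * e = 0)
    (hb₁ : e * b = 0) (hb₂ : b * e = 0) : f.addDefect a b = 0 := by
  have hee := he.isIdempotentElem
  set δ := f.addDefect a b with hδ
  have heδ : e * δ = 0 := he.eq_zero_of_forall_mul_eq_zero_left _ fun r => by
    rw [hδ, ← mul_assoc, mul_addDefect, mul_assoc, ha₁, mul_assoc, hb₁, mul_zero,
      addDefect_zero_left]
  refine he.eq_zero_of_mul_mul_eq_zero _ fun s => ?_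
  have hx₁ : e * (e * s - e * s * e) = e * s - e * s * e := by
    rw [mul_sub, ← mul_assoc e (e * s) e, hee.mul_self_mul]
  have hx₂ : (e * s - e * s * e) * e = 0 := by rw [sub_mul, hee.mul_mul_self, sub_self]
  calc e * s * δ = (e * s - e * s * e) * δ := by
        rw [sub_mul, mul_assoc (e * s) e δ, heδ, mul_zero, sub_zero]
    _ = 0 := by
      rw [hδ, mul_addDefect]
      exact addDefect_eq_zero_of_peirce₁₂ he (by rw [← mul_assoc, hx₁])
        (by rw [mul_assoc, ha₂, mul_zero]) (by rw [← mul_assoc, hx₁])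
        (by rw [mul_assoc, hb₂, mul_zero])

theorem addDefect_eq_zero_of_forall_addDefect_mul_eq_zero (he : IsNondegenerateIdempotent e)
    {a b : R} (ha : a * e = a) (hb : b * e = b)
    (h : ∀ x, e * x = x → x * e = 0 → f.addDefect (a * x) (b * x) = 0) :
    f.addDefect a b = 0 := by
  have hee := he.isIdempotentElem
  set δ := f.addDefect a b with hδ
  have hδe : δ * e = δ := by
    refine (sub_eq_zero.mp (he.eq_zero_of_forall_mul_eq_zero_right _ fun r => ?_)).symm
    rw [sub_mul, mul_assoc, ← mul_sub, hδ, addDefect_mul, mul_sub, ← mul_assoc, ha, sub_self,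
      mul_sub, ← mul_assoc, hb, sub_self, addDefect_zero_left]
  refine he.eq_zero_of_mul_eq_mul_mul _ fun r => ?_
  have hx := h (e * r - e * r * e) (by rw [mul_sub, ← mul_assoc e (e * r) e, hee.mul_self_mul])
    (by rw [sub_mul, hee.mul_mul_self, sub_self])
  rw [← addDefect_mul, ← hδ] at hx
  simpa only [mul_sub, ← mul_assoc, hδe, sub_eq_zero] using hx

theorem addDefect_eq_zero_of_peirce₂₁ (he : IsNondegenerateIdempotent e) {a b : R}
    (ha₁ : e * a = 0) (ha₂ : a * e = a)
    (hb₁ : e * b = 0) (hb₂ : b * e = b) : f.addDefect a b = 0 :=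
  addDefect_eq_zero_of_forall_addDefect_mul_eq_zero he ha₂ hb₂ fun _ _ hx₂ =>
    addDefect_eq_zero_of_peirce₂₂ he (by rw [← mul_assoc, ha₁, zero_mul])
      (by rw [mul_assoc, hx₂, mul_zero]) (by rw [← mul_assoc, hb₁, zero_mul])
      (by rw [mul_assoc, hx₂, mul_zero])

theorem addDefect_eq_zero_of_peirce₁₁ (he : IsNondegenerateIdempotent e) {a b : R}
    (ha₁ : e * a = a) (ha₂ : a * e = a)
    (hb₁ : e * b = b) (hb₂ : b * e = b) : f.addDefect a b = 0 :=
  addDefect_eq_zero_of_forall_addDefect_mul_eq_zero he ha₂ hb₂ fun _ _ hx₂ =>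
    addDefect_eq_zero_of_peirce₁₂ he (by rw [← mul_assoc, ha₁])
      (by rw [mul_assoc, hx₂, mul_zero]) (by rw [← mul_assoc, hb₁])
      (by rw [mul_assoc, hx₂, mul_zero])

end Peirce

theorem map_eq_map_mul_right_add_map_sub {e : R} (hr : ∀ x : R, (∀ r, x * r = 0) → x = 0)
    (he : IsIdempotentElem e) (x : R) : f x = f (x * e) + f (x - x * e) := by
  have h : f (x * e + (x - x * e)) = f (x * e) + f (x - x * e) :=
    (f.addDefect_eq_zero_iff _ _).mp <| f.addDefect_eq_zero_of_mul_right hr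
      (he.mul_mul_self x) (by rw [sub_mul, he.mul_mul_self, sub_self])
  rwa [add_sub_cancel] at h

theorem map_eq_map_mul_left_add_map_sub {e : R} (hl : ∀ x : R, (∀ r, r * x = 0) → x = 0)
    (he : IsIdempotentElem e) (x : R) : f x = f (e * x) + f (x - e * x) := by
  have h : f (e * x + (x - e * x)) = f (e * x) + f (x - e * x) :=
    (f.addDefect_eq_zero_iff _ _).mp <| f.addDefect_eq_zero_of_mul_left hl
      (he.mul_self_mul x) (by rw [mul_sub, he.mul_self_mul, sub_self])
  rwa [add_sub_cancel] at h

theorem map_add_of_isNondegenerateIdempotent {e : R} (he : IsNondegenerateIdempotent e)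
    (x y : R) : f (x + y) = f x + f y := by
  have hee := he.isIdempotentElem
  have hsplit : ∀ z, f z = f (e * (z * e)) + f (z * e - e * (z * e)) +
      (f (e * (z - z * e)) + f (z - z * e - e * (z - z * e))) := fun z => by
    rw [← f.map_eq_map_mul_left_add_map_sub he.eq_zero_of_forall_mul_eq_zero_left hee,
      ← f.map_eq_map_mul_left_add_map_sub he.eq_zero_of_forall_mul_eq_zero_left hee,
      ← f.map_eq_map_mul_right_add_map_sub he.eq_zero_of_forall_mul_eq_zero_right hee]
  have e₁₁ : e * ((x + y) * e) = e * (x * e) + e * (y * e) := by noncomm_ring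
  have e₂₁ : (x + y) * e - e * ((x + y) * e) = x * e - e * (x * e) + (y * e - e * (y * e)) := by
    noncomm_ring
  have e₁₂ : e * (x + y - (x + y) * e) = e * (x - x * e) + e * (y - y * e) := by noncomm_ring
  have e₂₂ : x + y - (x + y) * e - e * (x + y - (x + y) * e) =
      x - x * e - e * (x - x * e) + (y - y * e - e * (y - y * e)) := by noncomm_ring
  rw [hsplit (x + y), hsplit x, hsplit y, e₂₂, e₂₁, e₁₂, e₁₁,
    (f.addDefect_eq_zero_iff _ _).mp (addDefect_eq_zero_of_peirce₁₁ he ?_ ?_ ?_ ?_),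
    (f.addDefect_eq_zero_iff _ _).mp (addDefect_eq_zero_of_peirce₂₁ he ?_ ?_ ?_ ?_),
    (f.addDefect_eq_zero_iff _ _).mp (addDefect_eq_zero_of_peirce₁₂ he ?_ ?_ ?_ ?_),
    (f.addDefect_eq_zero_iff _ _).mp (addDefect_eq_zero_of_peirce₂₂ he ?_ ?_ ?_ ?_)]
  · abel
  all_goals simp [mul_sub, sub_mul, mul_assoc, hee.eq, hee.mul_self_mul]

end MulEquiv

theorem IsIdempotentElem.exists_ne_zero_mul_eq_zero {R : Type*} [NonUnitalRing R] {e : R}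
    (he : IsIdempotentElem e) (he₁ : ¬ ∀ x : R, e * x = x ∧ x * e = x) :
    ∃ t : R, t ≠ 0 ∧ (e * t = 0 ∨ t * e = 0) := by
  obtain ⟨x, hx⟩ := not_forall.mp he₁
  by_cases hex : e * x = x
  · refine ⟨x - x * e, sub_ne_zero.mpr fun h => hx ⟨hex, h.symm⟩, Or.inr ?_⟩
    rw [sub_mul, he.mul_mul_self, sub_self]
  · refine ⟨x - e * x, sub_ne_zero.mpr fun h => hex h.symm, Or.inl ?_⟩
    rw [mul_sub, he.mul_self_mul, sub_self]

theorem isNondegenerateIdempotent_of_prime {R : Type*} [NonUnitalRing R]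
    (hprime : ∀ a b : R, (∀ r : R, a * r * b = 0) → a = 0 ∨ b = 0) {e : R}
    (he : IsIdempotentElem e) (he₀ : e ≠ 0) (he₁ : ¬ ∀ x : R, e * x = x ∧ x * e = x) :
    IsNondegenerateIdempotent e where
  isIdempotentElem := he
  eq_zero_of_mul_mul_eq_zero x hx := (hprime e x hx).resolve_left he₀
  eq_zero_of_mul_eq_mul_mul x hx := by
    obtain ⟨t, ht₀, ht⟩ := he.exists_ne_zero_mul_eq_zero he₁
    refine (hprime x t fun r => ?_).resolve_right ht₀
    rcases ht with ht | ht
    · rw [hx, mul_assoc, ht, mul_zero]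
    · rw [mul_assoc, hx, mul_assoc, mul_assoc, ht, mul_zero, mul_zero]

/-- Every multiplicative bijective map from a prime ring containing a nontrivial
idempotent onto an arbitrary ring is additive. -/
theorem multiplicative_bijective_on_prime_ring_additive
    {R R' : Type*} [NonUnitalRing R] [NonUnitalRing R']
    (hprime : ∀ a b : R, (∀ r : R, a * r * b = 0) → a = 0 ∨ b = 0)
    (e : R) (he : e * e = e) (he₀ : e ≠ 0)
    (he₁ : ¬ ∀ x : R, e * x = x ∧ x * e = x)
    (φ : R → R') (hφ : Function.Bijective φ)
    (hmul : ∀ x y : R, φ (x * y) = φ x * φ y) :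
    ∀ x y : R, φ (x + y) = φ x + φ y :=
  (MulEquiv.ofBijective (MulHom.mk φ hmul) hφ).map_add_of_isNondegenerateIdempotent
    (isNondegenerateIdempotent_of_prime hprime he he₀ he₁)
end
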